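/- Let n = 2p be an even positive integer, let γ_1, …, γ_n be complex 2^p × 2^p matrices satisfying the Clifford relations γ_i γ_j + γ_j γ_i = -2 δ_{ij}·I, with grading operator Γ := i^p γ_1 ⋯ γ_n, and let F : Fin n → Fin n → Matrix (Fin w) (Fin w) ℂ be antisymmetric, F_{ji} = -F_{ij}. Then in the algebra of (2^p·w)×(2^p·w) matrices (identified with Kronecker products), tr((Γ ⊗ I) · (∑_{i<j} (γ_i γ_j) ⊗ F_{ij})^p) = (-i)^p · ∑_{τ ∈ S_n} sign(τ) · tr(F_{τ(1)τ(2)} · F_{τ(3)τ(4)} ⋯ F_{τ(n-1)τ(n)}). -/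

import Mathlib

open Kronecker

section clifford_aux

set_option maxHeartbeats 1000000

variable {M : Type*} [Ring M] [Algebra ℂ M] {ι : Type*}

variable {M : Type*} [Ring M] [Algebra ℂ M] {ι : Type*}

lemma ct_anti (g : ι → M) (c : M) :
    ∀ L : List ι, (∀ i ∈ L, c * g i = -(g i * c)) →
      c * (L.map g).prod = ((-1 : ℂ) ^ L.length) • ((L.map g).prod * c) := by
  intro L
  induction L with
  | nil => simp
  | cons a T ih =>
    intro h
    have ha := h a (by simp)
    have hT := ih (fun i hi => h i (by simp [hi]))
    simp only [List.map_cons, List.prod_cons, List.length_cons]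
    calc c * (g a * (T.map g).prod)
        = (c * g a) * (T.map g).prod := by rw [mul_assoc]
      _ = -(g a * (c * (T.map g).prod)) := by rw [ha]; simp [mul_assoc]
      _ = -(g a * (((-1 : ℂ) ^ T.length) • ((T.map g).prod * c))) := by rw [hT]
      _ = ((-1 : ℂ) ^ (T.length + 1)) • (g a * (T.map g).prod * c) := by
          rw [mul_smul_comm, pow_succ]
          simp [mul_assoc, mul_smul_comm, smul_smul]

lemma sq_list (g : ι → M) :
    ∀ L : List ι, L.Nodup → (∀ i ∈ L, g i * g i = -1) →
      (∀ i ∈ L, ∀ j ∈ L, i ≠ j → g i * g j = -(g j * g i)) →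
      (L.map g).prod * (L.map g).prod
        = ((-1 : ℂ) ^ (L.length * (L.length + 1) / 2)) • 1 := by
  intro L
  induction L with
  | nil => simp
  | cons a T ih =>
    intro hnd hs ha
    have haT : a ∉ T := by simp [List.nodup_cons] at hnd; exact hnd.1
    have hndT : T.Nodup := by simp [List.nodup_cons] at hnd; exact hnd.2
    have hct : g a * (T.map g).prod = ((-1 : ℂ) ^ T.length) • ((T.map g).prod * g a) :=
      ct_anti g (g a) T (fun i hi => ha a (by simp) i (by simp [hi])
        (by rintro rfl; exact haT hi))
    have hT := ih hndT (fun i hi => hs i (by simp [hi]))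
      (fun i hi j hj hij => ha i (by simp [hi]) j (by simp [hj]) hij)
    have hTa : (T.map g).prod * g a = ((-1 : ℂ) ^ T.length) • (g a * (T.map g).prod) := by
      rw [hct, smul_smul, ← pow_add, Even.neg_one_pow ⟨T.length, rfl⟩, one_smul]
    have harith : (T.length + 1) * (T.length + 1 + 1) / 2
        = T.length * (T.length + 1) / 2 + (T.length + 1) := by
      have h2 : (T.length + 1) * (T.length + 1 + 1)
          = T.length * (T.length + 1) + (T.length + 1) * 2 := by ring
      rw [h2, Nat.add_mul_div_right _ _ (by norm_num)]
    simp only [List.map_cons, List.prod_cons, List.length_cons]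
    calc g a * (T.map g).prod * (g a * (T.map g).prod)
        = g a * ((T.map g).prod * g a) * (T.map g).prod := by
          simp [mul_assoc]
      _ = ((-1 : ℂ) ^ T.length) • ((g a * g a) * ((T.map g).prod * (T.map g).prod)) := by
          rw [hTa]; simp [mul_smul_comm, smul_mul_assoc, mul_assoc]
      _ = ((-1 : ℂ) ^ T.length) • ((-1 : M) * (((-1 : ℂ) ^ (T.length * (T.length + 1) / 2)) • 1)) := by
          rw [hs a (by simp), hT]
      _ = ((-1 : ℂ) ^ ((T.length + 1) * (T.length + 1 + 1) / 2)) • 1 := by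
          rw [harith, mul_smul_comm, mul_one, smul_smul, smul_neg, ← neg_smul]
          congr 1
          ring

lemma swapcore (g : ι → M) (A B C : List ι) (x y : ι)
    (hxy : g x * g y = -(g y * g x))
    (hxB : ∀ b ∈ B, g x * g b = -(g b * g x))
    (hyB : ∀ b ∈ B, g y * g b = -(g b * g y)) :
    ((A ++ y :: (B ++ x :: C)).map g).prod = -(((A ++ x :: (B ++ y :: C)).map g).prod) := by
  simp only [List.map_append, List.map_cons, List.prod_append, List.prod_cons]
  have hx := ct_anti g (g x) B hxB
  have hy := ct_anti g (g y) B hyB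
  have key : g y * ((B.map g).prod * (g x * (C.map g).prod))
      = -(g x * ((B.map g).prod * (g y * (C.map g).prod))) := by
    have h1 : g y * ((B.map g).prod * (g x * (C.map g).prod))
        = ((-1 : ℂ) ^ B.length) • ((B.map g).prod * (g y * (g x * (C.map g).prod))) := by
      rw [← mul_assoc, hy]
      simp [smul_mul_assoc, mul_assoc]
    have h2 : g x * ((B.map g).prod * (g y * (C.map g).prod))
        = ((-1 : ℂ) ^ B.length) • ((B.map g).prod * (g x * (g y * (C.map g).prod))) := by
      rw [← mul_assoc, hx]
      simp [smul_mul_assoc, mul_assoc]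
    rw [h1, h2, ← smul_neg]
    congr 1
    have hyx : g y * g x = -(g x * g y) := by rw [hxy, neg_neg]
    have : g y * (g x * (C.map g).prod) = -(g x * (g y * (C.map g).prod)) := by
      rw [← mul_assoc, hyx, ← mul_assoc]
      simp [neg_mul]
    rw [this]
    simp [mul_neg]
  rw [key]
  simp [mul_neg]

lemma map_fix {f : ι → ι} {l : List ι} (h : ∀ a ∈ l, f a = a) : l.map f = l := by
  conv_rhs => rw [← List.map_id l]
  exact List.map_congr_left h

lemma swaplist [DecidableEq ι] (g : ι → M) (L : List ι) (hnd : L.Nodup) (x y : ι)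
    (hx : x ∈ L) (hy : y ∈ L) (hxy : x ≠ y)
    (hanti : ∀ a ∈ L, ∀ b ∈ L, a ≠ b → g a * g b = -(g b * g a)) :
    ((L.map (Equiv.swap x y)).map g).prod = -((L.map g).prod) := by
  obtain ⟨A, D, rfl⟩ := List.append_of_mem hx
  have hy' : y ∈ A ∨ y ∈ D := by
    rcases List.mem_append.mp hy with h | h
    · exact Or.inl h
    · rcases List.mem_cons.mp h with h | h
      · exact absurd h.symm hxy
      · exact Or.inr h
  rcases hy' with hyA | hyD
  · obtain ⟨A1, A2, rfl⟩ := List.append_of_mem hyA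
    have hL : (A1 ++ y :: A2) ++ x :: D = A1 ++ y :: (A2 ++ x :: D) := by
      simp [List.append_assoc]
    rw [hL] at hnd hanti ⊢
    simp only [List.nodup_append, List.nodup_cons, List.mem_append, List.mem_cons,
      List.disjoint_left] at hnd
    have hA1 : A1.map (Equiv.swap x y) = A1 := map_fix (fun a ha =>
      Equiv.swap_apply_of_ne_of_ne
        (by rintro rfl; exact (fun h => hnd.2.2 _ ha _ h rfl) (Or.inr (Or.inr (Or.inl rfl))))
        (by rintro rfl; exact (fun h => hnd.2.2 _ ha _ h rfl) (Or.inl rfl)))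
    have hA2 : A2.map (Equiv.swap x y) = A2 := map_fix (fun a ha =>
      Equiv.swap_apply_of_ne_of_ne
        (by rintro rfl; exact (fun h => hnd.2.1.2.2.2 _ ha _ h rfl) (Or.inl rfl))
        (by rintro rfl; exact hnd.2.1.1 (Or.inl ha)))
    have hD : D.map (Equiv.swap x y) = D := map_fix (fun a ha =>
      Equiv.swap_apply_of_ne_of_ne
        (by rintro rfl; exact hnd.2.1.2.2.1.1 ha)
        (by rintro rfl; exact hnd.2.1.1 (Or.inr (Or.inr ha))))
    have hmap : (A1 ++ y :: (A2 ++ x :: D)).map (Equiv.swap x y)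
        = A1 ++ x :: (A2 ++ y :: D) := by
      simp only [List.map_append, List.map_cons, Equiv.swap_apply_left,
        Equiv.swap_apply_right, hA1, hA2, hD]
    rw [hmap]
    exact swapcore g A1 A2 D y x
      (hanti y (by simp) x (by simp) (Ne.symm hxy))
      (fun b hb => hanti y (by simp) b (by simp [hb])
        (by rintro rfl; exact hnd.2.1.1 (Or.inl hb)))
      (fun b hb => hanti x (by simp) b (by simp [hb])
        (by rintro rfl; exact (fun h => hnd.2.1.2.2.2 _ hb _ h rfl) (Or.inl rfl)))
  · obtain ⟨B, C, rfl⟩ := List.append_of_mem hyD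
    simp only [List.nodup_append, List.nodup_cons, List.mem_append, List.mem_cons,
      List.disjoint_left] at hnd
    have hA : A.map (Equiv.swap x y) = A := map_fix (fun a ha =>
      Equiv.swap_apply_of_ne_of_ne
        (by rintro rfl; exact (fun h => hnd.2.2 _ ha _ h rfl) (Or.inl rfl))
        (by rintro rfl; exact (fun h => hnd.2.2 _ ha _ h rfl) (Or.inr (Or.inr (Or.inl rfl)))))
    have hB : B.map (Equiv.swap x y) = B := map_fix (fun a ha =>
      Equiv.swap_apply_of_ne_of_ne
        (by rintro rfl; exact hnd.2.1.1 (Or.inl ha))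
        (by rintro rfl; exact (fun h => hnd.2.1.2.2.2 _ ha _ h rfl) (Or.inl rfl)))
    have hC : C.map (Equiv.swap x y) = C := map_fix (fun a ha =>
      Equiv.swap_apply_of_ne_of_ne
        (by rintro rfl; exact hnd.2.1.1 (Or.inr (Or.inr ha)))
        (by rintro rfl; exact hnd.2.1.2.2.1.1 ha))
    have hmap : (A ++ x :: (B ++ y :: C)).map (Equiv.swap x y)
        = A ++ y :: (B ++ x :: C) := by
      simp only [List.map_append, List.map_cons, Equiv.swap_apply_left,
        Equiv.swap_apply_right, hA, hB, hC]
    rw [hmap]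
    exact swapcore g A B C x y
      (hanti x (by simp) y (by simp) hxy)
      (fun b hb => hanti x (by simp) b (by simp [hb])
        (by rintro rfl; exact hnd.2.1.1 (Or.inl hb)))
      (fun b hb => hanti y (by simp) b (by simp [hb])
        (by rintro rfl; exact (fun h => hnd.2.1.2.2.2 _ hb _ h rfl) (Or.inl rfl)))

-- gamma_k anticommutes with full product (length 2p)
lemma ganti (p : ℕ) (γ : Fin (2*p) → M)
    (hac : ∀ i j : Fin (2*p), i ≠ j → γ i * γ j = -(γ j * γ i)) (k : Fin (2*p)) :
    γ k * (List.ofFn γ).prod = -((List.ofFn γ).prod * γ k) := by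
  rw [List.ofFn_eq_map]
  obtain ⟨A, B, hsplit⟩ := List.append_of_mem (List.mem_finRange k)
  have hnd := List.nodup_finRange (2*p)
  rw [hsplit] at hnd ⊢
  simp only [List.nodup_append, List.nodup_cons] at hnd
  have hkA : k ∉ A := fun h => hnd.2.2 _ h _ List.mem_cons_self rfl
  have hkB : k ∉ B := hnd.2.1.1
  have hlen : A.length + B.length + 1 = 2 * p := by
    have := congrArg List.length hsplit
    simp at this
    omega
  have hA := ct_anti γ (γ k) A (fun i hi => hac k i (fun h => hkA (h ▸ hi)))
  have hB := ct_anti γ (γ k) B (fun i hi => hac k i (fun h => hkB (h ▸ hi)))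
  have hB' : (B.map γ).prod * γ k = ((-1 : ℂ) ^ B.length) • (γ k * (B.map γ).prod) := by
    rw [hB, smul_smul, ← pow_add, Even.neg_one_pow ⟨B.length, rfl⟩, one_smul]
  simp only [List.map_append, List.map_cons, List.prod_append, List.prod_cons]
  calc γ k * ((A.map γ).prod * (γ k * (B.map γ).prod))
      = (γ k * (A.map γ).prod) * (γ k * (B.map γ).prod) := by rw [mul_assoc]
    _ = ((-1 : ℂ) ^ A.length) • ((A.map γ).prod * γ k * (γ k * (B.map γ).prod)) := by
        rw [hA, smul_mul_assoc]
    _ = -(((-1 : ℂ) ^ B.length) • ((A.map γ).prod * γ k * (γ k * (B.map γ).prod))) := by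
        rw [← neg_smul]
        congr 1
        have h1 : ((-1 : ℂ) ^ A.length) * ((-1) ^ B.length) = -1 := by
          rw [← pow_add]
          exact Odd.neg_one_pow ⟨p - 1, by omega⟩
        have h2 : ((-1 : ℂ) ^ B.length) * ((-1) ^ B.length) = 1 := by
          rw [← pow_add]
          exact Even.neg_one_pow ⟨B.length, rfl⟩
        calc (-1 : ℂ) ^ A.length
            = (-1) ^ A.length * ((-1) ^ B.length * (-1) ^ B.length) := by rw [h2, mul_one]
          _ = ((-1) ^ A.length * (-1) ^ B.length) * (-1) ^ B.length := by ring
          _ = -(-1 : ℂ) ^ B.length := by rw [h1]; ring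
    _ = -((A.map γ).prod * (γ k * (B.map γ).prod) * γ k) := by
        congr 1
        simp only [mul_assoc, hB', mul_smul_comm]

end clifford_aux

section matrix_aux

set_option maxHeartbeats 1000000

variable {d : ℕ}

local notation "Mx" => Matrix (Fin d) (Fin d) ℂ

lemma prod_ofFn_kronecker {a b : ℕ} :
    ∀ (q : ℕ) (A : Fin q → Matrix (Fin a) (Fin a) ℂ) (B : Fin q → Matrix (Fin b) (Fin b) ℂ),
      (List.ofFn fun t => A t ⊗ₖ B t).prod = (List.ofFn A).prod ⊗ₖ (List.ofFn B).prod := by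
  intro q
  induction q with
  | zero => intro A B; simp [Matrix.one_kronecker_one]
  | succ q ih =>
    intro A B
    simp only [List.ofFn_succ, List.prod_cons]
    rw [ih, ← Matrix.mul_kronecker_mul]

lemma exp_sum {N : Type*} [Ring N] {ι : Type*} [Fintype ι] :
    ∀ (q : ℕ) (v : ι → N),
      (∑ x, v x) ^ q = ∑ g : Fin q → ι, (List.ofFn fun t => v (g t)).prod := by
  intro q
  induction q with
  | zero => intro v; simp
  | succ q ih =>
    intro v
    rw [pow_succ', ih, Finset.sum_mul]
    rw [← Equiv.sum_comp (Fin.consEquiv (fun _ : Fin (q+1) => ι))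
      (fun g : Fin (q+1) → ι => (List.ofFn fun t => v (g t)).prod)]
    rw [Fintype.sum_prod_type]
    congr 1
    funext x
    rw [Finset.mul_sum]
    congr 1
    funext g
    simp [Fin.consEquiv, List.ofFn_succ]

lemma interleave {N : Type*} [Ring N] :
    ∀ (m : ℕ) (u : ℕ → N),
      (List.ofFn fun t : Fin m => u (2 * t.1) * u (2 * t.1 + 1)).prod
        = (List.ofFn fun s : Fin (2 * m) => u s.1).prod := by
  intro m
  induction m with
  | zero => intro u; simp
  | succ m ih =>
    intro u
    have h2 : (List.ofFn fun s : Fin (2 * (m+1)) => u s.1)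
        = (List.ofFn fun s : Fin (2 * m + 1 + 1) => u s.1) := rfl
    rw [h2, List.ofFn_succ, List.ofFn_succ]
    simp only [List.prod_cons, List.ofFn_succ, Fin.val_succ, Fin.val_zero]
    rw [show (fun i : Fin m => u (2 * (i.1 + 1)) * u (2 * (i.1 + 1) + 1))
        = (fun i : Fin m => u (2 * i.1 + 2) * u (2 * i.1 + 1 + 2)) from
      funext fun i => by
        rw [congrArg u (show 2 * (i.1 + 1) = 2 * i.1 + 2 from by ring),
          congrArg u (show 2 * (i.1 + 1) + 1 = 2 * i.1 + 1 + 2 from by ring)]]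
    rw [ih (fun j => u (j + 2))]
    norm_num [mul_assoc]

lemma neg_kronecker_neg {a b : ℕ} (A : Matrix (Fin a) (Fin a) ℂ) (B : Matrix (Fin b) (Fin b) ℂ) :
    (-A) ⊗ₖ (-B) = A ⊗ₖ B := by
  ext ⟨i, j⟩ ⟨k, l⟩
  simp [Matrix.kroneckerMap_apply]

lemma vanish (p : ℕ) (γ : Fin (2*p) → Mx)
    (hsq : ∀ i, γ i * γ i = -1)
    (hac : ∀ i j : Fin (2*p), i ≠ j → γ i * γ j = -(γ j * γ i))
    (l : Fin (2*p) → Fin (2*p)) (hns : ¬ Function.Surjective l) :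
    Matrix.trace ((Complex.I ^ p • (List.ofFn γ).prod)
      * (List.ofFn fun s => γ (l s)).prod) = 0 := by
  obtain ⟨k, hk⟩ : ∃ k, ∀ a, l a ≠ k := by
    simp only [Function.Surjective, not_forall] at hns
    obtain ⟨k, hk⟩ := hns
    exact ⟨k, fun a h => hk ⟨a, h⟩⟩
  set Q : Mx := (List.ofFn γ).prod with hQdef
  set G : Mx := Complex.I ^ p • Q with hGdef
  set PP : Mx := (List.ofFn fun s => γ (l s)).prod with hPPdef
  have h1 : γ k * PP = PP * γ k := by
    have hform : PP = (((List.finRange (2*p)).map l).map γ).prod := by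
      rw [hPPdef, List.ofFn_eq_map, List.map_map]
      rfl
    have hct := ct_anti γ (γ k) ((List.finRange (2*p)).map l) (by
      intro i hi
      obtain ⟨a, _, rfl⟩ := List.mem_map.mp hi
      exact hac k (l a) (fun h => hk a h.symm))
    rw [hform, hct]
    simp only [List.length_map, List.length_finRange]
    rw [Even.neg_one_pow ⟨p, by ring⟩, one_smul]
  have h2 : γ k * G = -(G * γ k) := by
    rw [hGdef, mul_smul_comm, ganti p γ hac k, smul_mul_assoc]
    simp [hQdef]
  have key : γ k * (G * PP * γ k) = G * PP := by
    calc γ k * (G * PP * γ k) = ((γ k * G) * PP) * γ k := by simp only [mul_assoc]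
      _ = -(G * ((γ k * PP) * γ k)) := by rw [h2]; simp only [neg_mul, mul_assoc]
      _ = -(G * (PP * (γ k * γ k))) := by rw [h1]; simp only [mul_assoc]
      _ = G * PP := by rw [hsq k]; simp
  have htr : Matrix.trace (G * PP) = -(Matrix.trace (G * PP)) := by
    conv_lhs => rw [← key]
    rw [← Matrix.trace_mul_comm]
    calc Matrix.trace ((G * PP * γ k) * γ k)
        = Matrix.trace (G * PP * (γ k * γ k)) := by rw [mul_assoc]
      _ = -(Matrix.trace (G * PP)) := by rw [hsq k]; simp
  linear_combination (1/2 : ℂ) * htr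

lemma main_trace (p : ℕ) (hp : 0 < p) (γ : Fin (2*p) → Mx)
    (hsq : ∀ i, γ i * γ i = -1)
    (hac : ∀ i j : Fin (2*p), i ≠ j → γ i * γ j = -(γ j * γ i))
    (l : Fin (2*p) → Fin (2*p)) :
    Matrix.trace ((Complex.I ^ p • (List.ofFn γ).prod)
        * (List.ofFn fun s => γ (l s)).prod)
      = (if h : Function.Bijective l
          then ((Equiv.Perm.sign (Equiv.ofBijective l h) : ℤ) : ℂ) else 0)
        * ((-Complex.I) ^ p * Matrix.trace (1 : Mx)) := by
  have hQQ : (List.ofFn γ).prod * (List.ofFn γ).prod = ((-1 : ℂ) ^ p) • 1 := by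
    rw [List.ofFn_eq_map]
    rw [sq_list γ (List.finRange (2*p)) (List.nodup_finRange _)
      (fun i _ => hsq i) (fun i _ j _ hij => hac i j hij)]
    congr 1
    simp only [List.length_finRange]
    rw [show 2 * p * (2 * p + 1) / 2 = (2 * p + 1) * p by
      rw [show 2 * p * (2 * p + 1) = 2 * ((2 * p + 1) * p) by ring]
      exact Nat.mul_div_cancel_left _ (by norm_num)]
    rw [pow_mul, Odd.neg_one_pow ⟨p, by ring⟩]
  have swapstep : ∀ (l : Fin (2*p) → Fin (2*p)) (x y : Fin (2*p)), x ≠ y →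
      Matrix.trace ((Complex.I ^ p • (List.ofFn γ).prod)
          * (List.ofFn fun s => γ ((l ∘ Equiv.swap x y) s)).prod)
        = -(Matrix.trace ((Complex.I ^ p • (List.ofFn γ).prod)
          * (List.ofFn fun s => γ (l s)).prod)) := by
    intro l x y hxy
    by_cases hinj : Function.Injective l
    · have hPl : (List.ofFn fun s => γ ((l ∘ Equiv.swap x y) s)).prod
          = -((List.ofFn fun s => γ (l s)).prod) := by
        have hsw := swaplist (fun s => γ (l s)) (List.finRange (2*p))
          (List.nodup_finRange _) x y (List.mem_finRange x) (List.mem_finRange y) hxy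
          (fun a _ b _ hab => hac (l a) (l b) (fun h => hab (hinj h)))
        rw [List.map_map] at hsw
        rw [List.ofFn_eq_map, List.ofFn_eq_map]
        exact hsw
      rw [hPl, mul_neg, Matrix.trace_neg]
    · have hns : ¬ Function.Surjective l := fun hs =>
        hinj (Finite.injective_iff_bijective.mpr ((Finite.surjective_iff_bijective).mp hs))
      have hns2 : ¬ Function.Surjective (l ∘ Equiv.swap x y) := fun hs =>
        hns (Function.Surjective.of_comp hs)
      rw [vanish p γ hsq hac l hns, vanish p γ hsq hac _ hns2, neg_zero]
  have reorder : ∀ (σ : Equiv.Perm (Fin (2*p))) (l : Fin (2*p) → Fin (2*p)),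
      Matrix.trace ((Complex.I ^ p • (List.ofFn γ).prod)
          * (List.ofFn fun s => γ ((l ∘ σ) s)).prod)
        = ((Equiv.Perm.sign σ : ℤ) : ℂ) * Matrix.trace ((Complex.I ^ p • (List.ofFn γ).prod)
          * (List.ofFn fun s => γ (l s)).prod) := by
    intro σ
    refine Equiv.Perm.swap_induction_on σ ?_ ?_
    · intro l; simp
    · intro f x y hxy ih l
      have hcomp : (l ∘ ⇑(Equiv.swap x y * f)) = ((l ∘ ⇑(Equiv.swap x y)) ∘ ⇑f) := by
        funext t; simp [Equiv.Perm.mul_apply]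
      rw [hcomp, ih (l ∘ ⇑(Equiv.swap x y)), swapstep l x y hxy]
      simp only [Equiv.Perm.sign_mul, Equiv.Perm.sign_swap hxy]
      push_cast
      ring
  by_cases h : Function.Bijective l
  · rw [dif_pos h]
    have hl : l = ((fun s => s) ∘ ⇑(Equiv.ofBijective l h)) := by
      funext s; rfl
    conv_lhs => rw [hl]
    rw [reorder (Equiv.ofBijective l h) (fun s => s)]
    congr 1
    have hid : (List.ofFn fun s : Fin (2*p) => γ s) = List.ofFn γ := rfl
    rw [hid, smul_mul_assoc, hQQ, smul_smul, Matrix.trace_smul]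
    rw [smul_eq_mul, neg_pow]
    ring
  · rw [dif_neg h, zero_mul]
    exact vanish p γ hsq hac l (fun hs =>
      h ((Finite.surjective_iff_bijective).mp hs))

end matrix_aux

set_option maxHeartbeats 1000000 in
/-- the algebraic core of the index computation for a twisted
Dirac operator on a flat manifold: for an antisymmetric curvature family `F`,
`tr((Γ ⊗ I) (∑_{i<j} (γ_i γ_j) ⊗ F_{ij})^p)
   = (-i)^p ∑_{τ ∈ S_n} sign(τ) tr(F_{τ(1)τ(2)} ⋯ F_{τ(n-1)τ(n)})`. -/
theorem supertrace_curvature_power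
    (n p w : ℕ) (hn : n = 2 * p) (hpos : 0 < n)
    (γ : Fin n → Matrix (Fin (2 ^ p)) (Fin (2 ^ p)) ℂ)
    (hC : ∀ i j, γ i * γ j + γ j * γ i
      = (if i = j then (-2 : ℂ) else 0) • (1 : Matrix (Fin (2 ^ p)) (Fin (2 ^ p)) ℂ))
    (F : Fin n → Fin n → Matrix (Fin w) (Fin w) ℂ)
    (hF : ∀ i j, F j i = -F i j) :
    Matrix.trace
        (((Complex.I ^ p • (List.ofFn γ).prod) ⊗ₖ (1 : Matrix (Fin w) (Fin w) ℂ))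
          * (∑ i, ∑ j, if i < j then (γ i * γ j) ⊗ₖ F i j else 0) ^ p)
      = (-Complex.I) ^ p *
          ∑ τ : Equiv.Perm (Fin n), ((Equiv.Perm.sign τ : ℤ) : ℂ) *
            Matrix.trace
              (List.ofFn fun t : Fin p =>
                F (τ ⟨2 * t.1, by have := t.isLt; omega⟩)
                  (τ ⟨2 * t.1 + 1, by have := t.isLt; omega⟩)).prod := by
  subst hn
  have hp : 0 < p := by omega
  -- basic Clifford facts
  have hsq : ∀ i, γ i * γ i = -1 := by
    intro i
    have h := hC i i
    rw [if_pos rfl] at h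
    have h2 : (2 : ℂ) • (γ i * γ i) = (2 : ℂ) • (-1 : Matrix (Fin (2^p)) (Fin (2^p)) ℂ) := by
      rw [two_smul, h]
      simp
    exact smul_right_injective _ (two_ne_zero) h2
  have hac : ∀ i j : Fin (2*p), i ≠ j → γ i * γ j = -(γ j * γ i) := by
    intro i j hij
    have h := hC i j
    rw [if_neg hij, zero_smul] at h
    exact eq_neg_of_add_eq_zero_left h
  have hF0 : ∀ i, F i i = 0 := by
    intro i
    have h := hF i i
    have h2 : (2 : ℂ) • F i i = 0 := by
      rw [two_smul]
      nth_rewrite 1 [h]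
      simp
    exact (smul_eq_zero.mp h2).resolve_left (two_ne_zero)
  -- the X family and symmetrization
  set X : Fin (2*p) × Fin (2*p) → Matrix (Fin (2^p) × Fin w) (Fin (2^p) × Fin w) ℂ :=
    fun q => (γ q.1 * γ q.2) ⊗ₖ F q.1 q.2 with hXdef
  have step1 : (∑ i, ∑ j, if i < j then (γ i * γ j) ⊗ₖ F i j else 0)
      = (2 : ℂ)⁻¹ • ∑ q, X q := by
    have hsplit : ∀ i j : Fin (2*p), X (i, j)
        = (if i < j then (γ i * γ j) ⊗ₖ F i j else 0)
          + (if j < i then (γ i * γ j) ⊗ₖ F i j else 0) := by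
      intro i j
      rcases lt_trichotomy i j with h | h | h
      · rw [if_pos h, if_neg (asymm h), add_zero]
      · subst h
        simp [hXdef, hF0 i]
      · rw [if_neg (asymm h), if_pos h, zero_add]
    have hsum : ∑ q, X q = (∑ i, ∑ j, if i < j then (γ i * γ j) ⊗ₖ F i j else 0)
        + (∑ i, ∑ j, if i < j then (γ i * γ j) ⊗ₖ F i j else 0) := by
      rw [Fintype.sum_prod_type]
      calc ∑ i, ∑ j, X (i, j)
          = ∑ i, ∑ j, ((if i < j then (γ i * γ j) ⊗ₖ F i j else 0)
            + (if j < i then (γ i * γ j) ⊗ₖ F i j else 0)) := by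
            congr 1; funext i; congr 1; funext j; exact hsplit i j
        _ = (∑ i, ∑ j, if i < j then (γ i * γ j) ⊗ₖ F i j else 0)
            + (∑ i, ∑ j, if j < i then (γ i * γ j) ⊗ₖ F i j else 0) := by
            rw [← Finset.sum_add_distrib]
            congr 1; funext i
            rw [← Finset.sum_add_distrib]
        _ = (∑ i, ∑ j, if i < j then (γ i * γ j) ⊗ₖ F i j else 0)
            + (∑ i, ∑ j, if i < j then (γ i * γ j) ⊗ₖ F i j else 0) := by
            congr 1
            rw [Finset.sum_comm]
            congr 1; funext i; congr 1; funext j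
            rcases lt_or_ge i j with h | h
            · rw [if_pos h, if_pos h]
              have e1 : γ j * γ i = -(γ i * γ j) := by
                rw [hac i j (ne_of_lt h), neg_neg]
              rw [e1, hF i j, neg_kronecker_neg]
            · rw [if_neg (not_lt.mpr h), if_neg (not_lt.mpr h)]
    rw [hsum, ← two_smul ℂ, smul_smul, inv_mul_cancel₀ (two_ne_zero), one_smul]
  -- the interleaving index map
  set lg : (Fin p → Fin (2*p) × Fin (2*p)) → (Fin (2*p) → Fin (2*p)) :=
    fun g s => if s.1 % 2 = 0 then (g ⟨s.1 / 2, by have := s.2; omega⟩).1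
               else (g ⟨s.1 / 2, by have := s.2; omega⟩).2 with hlgdef
  set e : Equiv.Perm (Fin (2*p)) → (Fin p → Fin (2*p) × Fin (2*p)) :=
    fun τ t => (τ ⟨2*t.1, by have := t.2; omega⟩, τ ⟨2*t.1+1, by have := t.2; omega⟩)
    with hedef
  have hlg_even : ∀ (g : Fin p → Fin (2*p) × Fin (2*p)) (t : Fin p) (h : 2*t.1 < 2*p),
      lg g ⟨2*t.1, h⟩ = (g t).1 := by
    intro g t h
    simp only [hlgdef]
    rw [if_pos (by omega : 2*t.1 % 2 = 0)]
    refine congrArg (fun z => (g z).1) (Fin.ext ?_)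
    show 2*t.1/2 = t.1
    omega
  have hlg_odd : ∀ (g : Fin p → Fin (2*p) × Fin (2*p)) (t : Fin p) (h : 2*t.1+1 < 2*p),
      lg g ⟨2*t.1+1, h⟩ = (g t).2 := by
    intro g t h
    simp only [hlgdef]
    rw [if_neg (by omega : ¬ (2*t.1+1) % 2 = 0)]
    refine congrArg (fun z => (g z).2) (Fin.ext ?_)
    show (2*t.1+1)/2 = t.1
    omega
  have hle : ∀ τ : Equiv.Perm (Fin (2*p)), lg (e τ) = ⇑τ := by
    intro τ
    funext s
    simp only [hlgdef, hedef]
    by_cases hs : s.1 % 2 = 0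
    · rw [if_pos hs]
      refine congrArg τ (Fin.ext ?_)
      show 2*(s.1/2) = s.1
      omega
    · rw [if_neg hs]
      refine congrArg τ (Fin.ext ?_)
      show 2*(s.1/2)+1 = s.1
      omega
  -- per-term evaluation
  have hterm : ∀ g : Fin p → Fin (2*p) × Fin (2*p),
      Matrix.trace ((((Complex.I ^ p • (List.ofFn γ).prod))
            ⊗ₖ (1 : Matrix (Fin w) (Fin w) ℂ))
          * (List.ofFn fun t => X (g t)).prod)
        = ((-Complex.I)^p * (2^p : ℂ))
          * ((if h : Function.Bijective (lg g)
              then ((Equiv.Perm.sign (Equiv.ofBijective (lg g) h) : ℤ) : ℂ) else 0)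
            * Matrix.trace (List.ofFn fun t => F (g t).1 (g t).2).prod) := by
    intro g
    have hXg : (List.ofFn fun t => X (g t))
        = List.ofFn fun t => (γ (g t).1 * γ (g t).2) ⊗ₖ F (g t).1 (g t).2 := rfl
    rw [hXg, prod_ofFn_kronecker p (fun t => γ (g t).1 * γ (g t).2)
      (fun t => F (g t).1 (g t).2), ← Matrix.mul_kronecker_mul, one_mul,
      Matrix.trace_kronecker]
    have hPA : (List.ofFn fun t : Fin p => γ (g t).1 * γ (g t).2).prod
        = (List.ofFn fun s : Fin (2*p) => γ (lg g s)).prod := by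
      have hint := interleave p
        (fun j => if h : j < 2*p then γ (lg g ⟨j, h⟩) else 1)
      have h1 : (List.ofFn fun t : Fin p => γ (g t).1 * γ (g t).2)
          = (List.ofFn fun t : Fin p =>
              (fun j => if h : j < 2*p then γ (lg g ⟨j, h⟩) else 1) (2*t.1)
              * (fun j => if h : j < 2*p then γ (lg g ⟨j, h⟩) else 1) (2*t.1+1)) := by
        congr 1
        funext t
        have e0 : 2*t.1 < 2*p := by have := t.2; omega
        have e1 : 2*t.1+1 < 2*p := by have := t.2; omega
        simp only [dif_pos e0, dif_pos e1]
        rw [hlg_even g t e0, hlg_odd g t e1]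
      have h2 : (List.ofFn fun s : Fin (2*p) =>
            (fun j => if h : j < 2*p then γ (lg g ⟨j, h⟩) else 1) s.1)
          = (List.ofFn fun s : Fin (2*p) => γ (lg g s)) := by
        congr 1
        funext s
        simp only [dif_pos s.2]
      rw [h1, hint, h2]
    rw [hPA, main_trace p hp γ hsq hac (lg g), Matrix.trace_one]
    simp only [Fintype.card_fin]
    push_cast
    try ring
  -- expand the power and sum
  rw [step1, smul_pow, exp_sum p X, mul_smul_comm, Matrix.trace_smul, Finset.mul_sum,
    Matrix.trace_sum]
  rw [Finset.sum_congr rfl (fun g _ => hterm g)]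
  rw [← Finset.mul_sum, smul_eq_mul, ← mul_assoc]
  have hconst : ((2:ℂ)⁻¹)^p * ((-Complex.I)^p * (2^p : ℂ)) = (-Complex.I)^p := by
    rw [show ((2:ℂ)⁻¹)^p * ((-Complex.I)^p * (2^p : ℂ))
        = ((2:ℂ)⁻¹ * 2)^p * (-Complex.I)^p by rw [mul_pow]; ring]
    norm_num
  rw [hconst]
  congr 1
  -- final bijection between permutations and admissible index functions
  refine (Finset.sum_of_injOn e ?_ ?_ ?_ ?_).symm
  · intro τ _ τ' _ h
    exact Equiv.ext fun s => by rw [← hle τ, h, hle τ']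
  · intro τ _
    simp
  · intro g _ hg
    by_cases hb : Function.Bijective (lg g)
    · exfalso
      apply hg
      refine ⟨Equiv.ofBijective (lg g) hb, by simp, ?_⟩
      funext t
      simp only [hedef]
      have e0 : 2*t.1 < 2*p := by have := t.2; omega
      have e1 : 2*t.1+1 < 2*p := by have := t.2; omega
      have hfst : Equiv.ofBijective (lg g) hb ⟨2*t.1, e0⟩ = (g t).1 := by
        rw [Equiv.ofBijective_apply, hlg_even g t e0]
      have hsnd : Equiv.ofBijective (lg g) hb ⟨2*t.1+1, e1⟩ = (g t).2 := by
        rw [Equiv.ofBijective_apply, hlg_odd g t e1]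
      rw [hfst, hsnd]
    · rw [dif_neg hb, zero_mul]
  · intro τ _
    have hb : Function.Bijective (lg (e τ)) := by rw [hle τ]; exact τ.bijective
    rw [dif_pos hb]
    have hsign : Equiv.ofBijective (lg (e τ)) hb = τ := by
      apply Equiv.ext
      intro s
      rw [Equiv.ofBijective_apply, hle τ]
    rw [hsign]
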